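/- Let (C, Δ, ε) be a coaugmented conilpotent k-coalgebra with coaugmentation group-like element e. Then every simple left C-contramodule (S, θ) is one-dimensional over k and its contra-action is given by θ(φ) = φ(e) for all linear φ : C → S. -/

import Mathlib

/-!
STATEMENT 12: Let (C, Δ, ε) be a coaugmented conilpotent k-coalgebra with coaugmentation
group-like element e. Then every simple left C-contramodule (S, θ) is one-dimensional over
k and its contra-action is given by θ(φ) = φ(e) for all linear φ : C → S.

Conilpotency is encoded dually: for every x ∈ ker ε there is n ≥ 1 such that every n-fold
convolution product of functionals vanishing at e kills x (this is exactly the vanishing of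
the n-fold iterated reduced comultiplication of x, since functionals vanishing at e are
precisely the functionals on C⁺ = ker ε, and pure tensors of functionals separate points of
C⁺ ⊗ ⋯ ⊗ C⁺ over a field).
-/

open TensorProduct LinearMap

noncomputable section

variable (k : Type*) [Field k]
variable (C : Type*) [AddCommGroup C] [Module k C] [Coalgebra k C]

def IsContramodule {B : Type*} [AddCommGroup B] [Module k B]
    (θ : (C →ₗ[k] B) →ₗ[k] B) : Prop :=
  (∀ Φ : C →ₗ[k] (C →ₗ[k] B),
      θ (θ ∘ₗ Φ) = θ ((TensorProduct.lift Φ.flip) ∘ₗ Coalgebra.comul)) ∧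
  (∀ b : B, θ ((LinearMap.toSpanSingleton k B b) ∘ₗ Coalgebra.counit) = b)

/-- A subspace `N` is a subcontramodule if `θ(φ) ∈ N` whenever `range φ ⊆ N`. -/
def IsSubContra {B : Type*} [AddCommGroup B] [Module k B]
    (θ : (C →ₗ[k] B) →ₗ[k] B) (N : Submodule k B) : Prop :=
  ∀ φ : C →ₗ[k] B, LinearMap.range φ ≤ N → θ φ ∈ N

/-- The convolution product on the dual algebra `C* = Hom_k(C,k)`:
`(f ⋆ g)(c) = f(c₍₁₎)g(c₍₂₎)`. -/
def conv (f g : C →ₗ[k] k) : C →ₗ[k] k :=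
  (LinearMap.mul' k k) ∘ₗ (TensorProduct.map f g) ∘ₗ Coalgebra.comul

/-- `n`-fold convolution product `f₁ ⋆ f₂ ⋆ ⋯ ⋆ fₙ` (empty product is `ε`). -/
def iterConv : (n : ℕ) → (Fin n → (C →ₗ[k] k)) → (C →ₗ[k] k)
  | 0, _ => Coalgebra.counit
  | n + 1, f => conv k C (f 0) (iterConv n (fun i => f i.succ))

/-!
Let `N` be the image under `θ` of the maps vanishing at `e`; contra-unity gives `θ φ - φ e ∈ N`,
so `N` is a subcontramodule. If `N = 0` then `θ φ = φ e`, every subspace is a subcontramodule,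
and simplicity forces dimension one. If `N = S`, pick a section `σ` of `θ` with values in the
maps vanishing at `e` and iterate `T ψ : c ↦ σ (ψ c₍₂₎) c₍₁₎` starting from `σ b`. Conilpotency
makes the iterates vanish eventually at each point, so `P = ∑ₘ Tᵐ (σ b)` is a well-defined map
with `T P = P - σ b`, while contra-associativity for `σ ∘ P` gives `θ (T P) = θ P`. Hence
`b = θ (σ b) = 0` (a contramodule Nakayama lemma), contradicting `S ≠ 0`.
-/

section TensorSeparation

variable {R M N : Type*} [CommRing R] [AddCommGroup M] [Module R M]
  [AddCommGroup N] [Module R N]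

theorem TensorProduct.eq_zero_of_forall_rTensor_eq_zero [Module.Free R M] (t : M ⊗[R] N)
    (h : ∀ f : Module.Dual R M, f.rTensor N t = 0) : t = 0 := by
  classical
  let ℬ := Module.Free.chooseBasis R M
  apply (TensorProduct.equivFinsuppOfBasisLeft ℬ).injective
  ext i
  simp [TensorProduct.equivFinsuppOfBasisLeft_apply, h]

theorem TensorProduct.eq_tmul_of_forall_rTensor_eq_zero [Module.Free R M] {e : M}
    {ε : Module.Dual R M} (he : ε e = 1) (t : M ⊗[R] N)
    (h : ∀ f : Module.Dual R M, f e = 0 → f.rTensor N t = 0) :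
    t = e ⊗ₜ TensorProduct.lid R N (ε.rTensor N t) := by
  rw [← sub_eq_zero]
  apply TensorProduct.eq_zero_of_forall_rTensor_eq_zero
  intro f
  have hf : (f - f e • ε).rTensor N t = 0 := h _ (by simp [he])
  rw [LinearMap.rTensor_sub, LinearMap.rTensor_smul, LinearMap.sub_apply, sub_eq_zero] at hf
  rw [map_sub, hf, LinearMap.rTensor_tmul, sub_eq_zero, LinearMap.smul_apply]
  conv_rhs => rw [← mul_one (f e), ← smul_eq_mul, ← TensorProduct.smul_tmul',
    ← TensorProduct.lid_symm_apply, LinearEquiv.symm_apply_apply]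

theorem TensorProduct.lid_rTensor_lTensor {P : Type*} [AddCommGroup P] [Module R P]
    (f : Module.Dual R M) (φ : N →ₗ[R] P) (u : M ⊗[R] N) :
    TensorProduct.lid R P (f.rTensor P (φ.lTensor M u)) =
      φ (TensorProduct.lid R N (f.rTensor N u)) := by
  induction u using TensorProduct.induction_on <;> simp_all

end TensorSeparation

section Augmentation

variable {k C}

theorem conv_apply (f g : C →ₗ[k] k) (x : C) :
    conv k C f g x = g (TensorProduct.lid k C (f.rTensor C (Coalgebra.comul x))) := by
  have h : LinearMap.mul' k k ∘ₗ TensorProduct.map f g =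
      g ∘ₗ (TensorProduct.lid k C).toLinearMap ∘ₗ f.rTensor C := by
    ext c d
    simp
  exact LinearMap.congr_fun h (Coalgebra.comul x)

theorem conv_counit (f : C →ₗ[k] k) : conv k C f Coalgebra.counit = f := by
  ext x
  rw [conv, LinearMap.comp_apply, LinearMap.comp_apply, ← LinearMap.rTensor_comp_lTensor,
    LinearMap.comp_apply, Coalgebra.lTensor_counit_comul]
  simp

theorem iterConv_one (f : Fin 1 → (C →ₗ[k] k)) : iterConv k C 1 f = f 0 :=
  conv_counit (f 0)

theorem iterConv_cons_apply {n : ℕ} (f : C →ₗ[k] k) (g : Fin n → (C →ₗ[k] k)) (x : C) :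
    iterConv k C (n + 1) (Fin.cons f g) x =
      iterConv k C n g (TensorProduct.lid k C (f.rTensor C (Coalgebra.comul x))) := by
  simp only [iterConv, Fin.cons_zero, Fin.cons_succ, conv_apply]

variable (k) in
/-- `x` is killed by the `n`-th power of the augmentation ideal `{f | f e = 0}` of the
convolution algebra `C →ₗ[k] k`. -/
def AnnihilatedByAugmentationPow (e : C) (n : ℕ) (x : C) : Prop :=
  ∀ f : Fin n → (C →ₗ[k] k), (∀ i, f i e = 0) → iterConv k C n f x = 0

theorem AnnihilatedByAugmentationPow.mem_span_singleton {e x : C}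
    (hx : AnnihilatedByAugmentationPow k e 1 x) : x ∈ k ∙ e := by
  rw [← Subspace.forall_mem_dualAnnihilator_apply_eq_zero_iff]
  intro φ hφ
  rw [Submodule.mem_dualAnnihilator] at hφ
  simpa [iterConv_one] using hx (fun _ => φ) fun _ => hφ e (Submodule.mem_span_singleton_self e)

theorem AnnihilatedByAugmentationPow.lid_rTensor_comul {e x : C} {n : ℕ}
    (hx : AnnihilatedByAugmentationPow k e (n + 1) x) {f : C →ₗ[k] k} (hf : f e = 0) :
    AnnihilatedByAugmentationPow k e n
      (TensorProduct.lid k C (f.rTensor C (Coalgebra.comul x))) := by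
  intro g hg
  rw [← iterConv_cons_apply]
  exact hx _ (Fin.cases hf hg)

end Augmentation

section FinsumOfEventuallyZero

open Filter

variable {R M N : Type*} [Semiring R] [AddCommMonoid M] [Module R M] [AddCommMonoid N]
  [Module R N]

theorem hasFiniteSupport_of_eventually_eq_zero {f : ℕ → N} (hf : ∀ᶠ m in atTop, f m = 0) :
    Function.HasFiniteSupport f := by
  obtain ⟨n, hn⟩ := eventually_atTop.mp hf
  refine (Set.finite_Iio n).subset fun m hm => ?_
  by_contra hmn
  exact hm (hn m (not_lt.mp hmn))

def LinearMap.finsumOfEventuallyZero (ψ : ℕ → M →ₗ[R] N)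
    (hψ : ∀ x, ∀ᶠ m in atTop, ψ m x = 0) : M →ₗ[R] N where
  toFun x := ∑ᶠ m, ψ m x
  map_add' x y := by
    simp only [map_add]
    exact finsum_add_distrib (hasFiniteSupport_of_eventually_eq_zero (hψ x))
      (hasFiniteSupport_of_eventually_eq_zero (hψ y))
  map_smul' a x := by
    simp only [map_smul, RingHom.id_apply]
    exact (smul_finsum' a (hasFiniteSupport_of_eventually_eq_zero (hψ x))).symm

theorem LinearMap.finsumOfEventuallyZero_apply {ψ : ℕ → M →ₗ[R] N}
    {hψ : ∀ x, ∀ᶠ m in atTop, ψ m x = 0} {x : M} {n : ℕ} (hn : ∀ m ≥ n, ψ m x = 0) :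
    finsumOfEventuallyZero ψ hψ x = ∑ m ∈ Finset.range n, ψ m x := by
  refine finsum_eq_sum_of_support_subset _ fun m hm => ?_
  by_contra hmn
  exact hm (hn m (by simpa using hmn))

end FinsumOfEventuallyZero

section ContraStep

variable {k C} {S : Type*} [AddCommGroup S] [Module k S]

/-- The map `T : ψ ↦ (c ↦ σ (ψ c₍₂₎) c₍₁₎)` of the contramodule Nakayama argument. -/
def contraStep (σ : S →ₗ[k] C →ₗ[k] S) : (C →ₗ[k] S) →ₗ[k] C →ₗ[k] S where
  toFun ψ := TensorProduct.lift σ.flip ∘ₗ ψ.lTensor C ∘ₗ Coalgebra.comul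
  map_add' ψ ψ' := by simp only [LinearMap.lTensor_add, LinearMap.add_comp, LinearMap.comp_add]
  map_smul' a ψ := by
    simp only [LinearMap.lTensor_smul, LinearMap.smul_comp, LinearMap.comp_smul, RingHom.id_apply]

theorem contraStep_apply (σ : S →ₗ[k] C →ₗ[k] S) (ψ : C →ₗ[k] S) (x : C) :
    contraStep σ ψ x = TensorProduct.lift σ.flip (ψ.lTensor C (Coalgebra.comul x)) :=
  rfl

theorem contraStep_eq_lift_comp_comul (σ : S →ₗ[k] C →ₗ[k] S) (ψ : C →ₗ[k] S) :
    contraStep σ ψ = TensorProduct.lift (σ ∘ₗ ψ).flip ∘ₗ Coalgebra.comul := by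
  rw [contraStep, LinearMap.coe_mk, AddHom.coe_mk, ← LinearMap.comp_assoc]
  congr 1
  exact TensorProduct.ext' fun _ _ => rfl

end ContraStep

section Nakayama

open Filter

variable {k C} {S : Type*} [AddCommGroup S] [Module k S] {σ : S →ₗ[k] C →ₗ[k] S} {e : C}

theorem contraStep_apply_eq_zero_of_comul_eq (he : Coalgebra.comul (R := k) e = e ⊗ₜ[k] e)
    (hσ : ∀ s, σ s e = 0) (ψ : C →ₗ[k] S) : contraStep σ ψ e = 0 := by
  simp [contraStep_apply, he, hσ]

theorem iterate_contraStep_apply_self_eq_zero (he : Coalgebra.comul (R := k) e = e ⊗ₜ[k] e)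
    (hσ : ∀ s, σ s e = 0) {ψ : C →ₗ[k] S} (hψ : ψ e = 0) :
    ∀ m, (contraStep σ)^[m] ψ e = 0
  | 0 => hψ
  | m + 1 => by
    rw [Function.iterate_succ_apply']
    exact contraStep_apply_eq_zero_of_comul_eq he hσ _

theorem iterate_contraStep_apply_eq_zero (he : Coalgebra.counit (R := k) e = 1)
    (hσ : ∀ s, σ s e = 0) {ψ : C →ₗ[k] S} (hψ : ψ e = 0) {n : ℕ} {x : C}
    (hx : AnnihilatedByAugmentationPow k e (n + 1) x) : (contraStep σ)^[n] ψ x = 0 := by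
  induction n generalizing x with
  | zero =>
    obtain ⟨a, rfl⟩ := Submodule.mem_span_singleton.mp hx.mem_span_singleton
    simp [hψ]
  | succ n ih =>
    set φ := (contraStep σ)^[n] ψ
    -- Every functional vanishing at `e` kills the left leg of `x₍₁₎ ⊗ φ x₍₂₎`, which is
    -- therefore of the form `e ⊗ s`.
    have hleft : ∀ f : Module.Dual k C, f e = 0 →
        f.rTensor S (φ.lTensor C (Coalgebra.comul x)) = 0 := by
      intro f hf
      rw [← (TensorProduct.lid k S).map_eq_zero_iff, TensorProduct.lid_rTensor_lTensor]
      exact ih (hx.lid_rTensor_comul hf)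
    rw [Function.iterate_succ_apply', contraStep_apply,
      TensorProduct.eq_tmul_of_forall_rTensor_eq_zero he _ hleft]
    simp [hσ]

theorem eventually_iterate_contraStep_apply_eq_zero
    (he_comul : Coalgebra.comul (R := k) e = e ⊗ₜ[k] e)
    (he_counit : Coalgebra.counit (R := k) e = 1)
    (hconil : ∀ x ∈ LinearMap.ker (Coalgebra.counit (R := k) (A := C)),
      ∃ n : ℕ, 1 ≤ n ∧ AnnihilatedByAugmentationPow k e n x)
    (hσ : ∀ s, σ s e = 0) {ψ : C →ₗ[k] S} (hψ : ψ e = 0) (x : C) :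
    ∀ᶠ m in atTop, (contraStep σ)^[m] ψ x = 0 := by
  obtain ⟨n, hn, hx⟩ := hconil (x - Coalgebra.counit (R := k) x • e) (by simp [he_counit])
  obtain ⟨n, rfl⟩ := Nat.exists_eq_add_of_le' hn
  refine eventually_atTop.mpr ⟨n, fun m hm => ?_⟩
  have hsub : (contraStep σ)^[m] ψ (x - Coalgebra.counit (R := k) x • e) = 0 := by
    rw [← Nat.add_sub_cancel' hm, Function.iterate_add_apply]
    exact iterate_contraStep_apply_eq_zero he_counit hσ
      (iterate_contraStep_apply_self_eq_zero he_comul hσ hψ _) hx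
  rwa [map_sub, map_smul, iterate_contraStep_apply_self_eq_zero he_comul hσ hψ, smul_zero,
    sub_zero] at hsub

theorem contraStep_apply_of_comul_eq_sum {x : C} {F : Finset (C × C)}
    (hF : Coalgebra.comul (R := k) x = ∑ p ∈ F, p.1 ⊗ₜ[k] p.2) (ψ : C →ₗ[k] S) :
    contraStep σ ψ x = ∑ p ∈ F, σ (ψ p.2) p.1 := by
  simp [contraStep_apply, hF]

theorem contraStep_finsumOfEventuallyZero {ψ : C →ₗ[k] S}
    (hψ : ∀ x, ∀ᶠ m in atTop, (contraStep σ)^[m] ψ x = 0) :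
    contraStep σ (LinearMap.finsumOfEventuallyZero (fun m => (contraStep σ)^[m] ψ) hψ) =
      LinearMap.finsumOfEventuallyZero (fun m => (contraStep σ)^[m] ψ) hψ - ψ := by
  ext x
  obtain ⟨F, hF⟩ := TensorProduct.exists_finset (R := k) (Coalgebra.comul (R := k) x)
  obtain ⟨N, hN⟩ := eventually_atTop.mp
    ((hψ x).and ((eventually_all_finset F).mpr fun p _ => hψ p.2))
  calc _ = ∑ p ∈ F, σ (∑ m ∈ Finset.range N, (contraStep σ)^[m] ψ p.2) p.1 := by
        rw [contraStep_apply_of_comul_eq_sum hF]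
        refine Finset.sum_congr rfl fun p hp => ?_
        rw [LinearMap.finsumOfEventuallyZero_apply fun m hm => (hN m hm).2 p hp]
    _ = ∑ m ∈ Finset.range N, (contraStep σ)^[m + 1] ψ x := by
        simp only [← LinearMap.sum_apply, ← contraStep_apply_of_comul_eq_sum hF, map_sum,
          Function.iterate_succ_apply']
    _ = ∑ m ∈ Finset.range (N + 1), (contraStep σ)^[m] ψ x - ψ x := by
        rw [Finset.sum_range_succ', Function.iterate_zero_apply, add_sub_cancel_right]
    _ = _ := by
        rw [LinearMap.sub_apply,
          LinearMap.finsumOfEventuallyZero_apply (n := N + 1) fun m hm => (hN m (by omega)).1]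

end Nakayama

section Contramodule

variable {k C} {S : Type*} [AddCommGroup S] [Module k S] {θ : (C →ₗ[k] S) →ₗ[k] S} {e : C}

theorem IsContramodule.eq_zero_of_comp_eq_id (hθ : IsContramodule k C θ)
    (he_comul : Coalgebra.comul (R := k) e = e ⊗ₜ[k] e)
    (he_counit : Coalgebra.counit (R := k) e = 1)
    (hconil : ∀ x ∈ LinearMap.ker (Coalgebra.counit (R := k) (A := C)),
      ∃ n : ℕ, 1 ≤ n ∧ AnnihilatedByAugmentationPow k e n x)
    {σ : S →ₗ[k] C →ₗ[k] S} (hθσ : θ ∘ₗ σ = LinearMap.id) (hσ : ∀ s, σ s e = 0) (b : S) :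
    b = 0 := by
  have hψ := eventually_iterate_contraStep_apply_eq_zero he_comul he_counit hconil hσ (hσ b)
  set P := LinearMap.finsumOfEventuallyZero _ hψ
  have hθP : θ (contraStep σ P) = θ P := by
    rw [contraStep_eq_lift_comp_comul, ← hθ.1, ← LinearMap.comp_assoc, hθσ, LinearMap.id_comp]
  rw [contraStep_finsumOfEventuallyZero, map_sub, sub_eq_self] at hθP
  simpa [hθP] using (LinearMap.congr_fun hθσ b).symm

theorem IsContramodule.subsingleton_of_map_ker_eq_top (hθ : IsContramodule k C θ)
    (he_comul : Coalgebra.comul (R := k) e = e ⊗ₜ[k] e)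
    (he_counit : Coalgebra.counit (R := k) e = 1)
    (hconil : ∀ x ∈ LinearMap.ker (Coalgebra.counit (R := k) (A := C)),
      ∃ n : ℕ, 1 ≤ n ∧ AnnihilatedByAugmentationPow k e n x)
    (htop : (LinearMap.ker (LinearMap.applyₗ e)).map θ = ⊤) : Subsingleton S := by
  obtain ⟨σ, hσ⟩ := (θ ∘ₗ (LinearMap.ker (LinearMap.applyₗ (R := k) (M₂ := S) e)).subtype)
    |>.exists_rightInverse_of_surjective (by rwa [LinearMap.range_comp, Submodule.range_subtype])
  refine subsingleton_of_forall_eq 0 <|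
    hθ.eq_zero_of_comp_eq_id he_comul he_counit hconil (σ := Submodule.subtype _ ∘ₗ σ) hσ ?_
  exact fun s => (σ s).2

theorem IsContramodule.sub_apply_mem_map_ker (hθ : IsContramodule k C θ)
    (he_counit : Coalgebra.counit (R := k) e = 1) (φ : C →ₗ[k] S) :
    θ φ - φ e ∈ (LinearMap.ker (LinearMap.applyₗ e)).map θ :=
  ⟨φ - LinearMap.toSpanSingleton k S (φ e) ∘ₗ Coalgebra.counit, by simp [he_counit],
    by rw [map_sub, hθ.2]⟩

theorem IsContramodule.isSubContra_map_ker (hθ : IsContramodule k C θ)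
    (he_counit : Coalgebra.counit (R := k) e = 1) :
    IsSubContra k C θ ((LinearMap.ker (LinearMap.applyₗ e)).map θ) := by
  intro φ hφ
  rw [← sub_add_cancel (θ φ) (φ e)]
  exact add_mem (hθ.sub_apply_mem_map_ker he_counit φ) (hφ ⟨e, rfl⟩)

end Contramodule

theorem simple_contramodule_over_conilpotent
    -- `e` is a coaugmentation group-like element of `C`
    (e : C)
    (he_comul : Coalgebra.comul (R := k) e = e ⊗ₜ[k] e)
    (he_counit : Coalgebra.counit (R := k) e = (1 : k))
    -- `C` is conilpotent: the `n`-fold iterated reduced comultiplication of each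
    -- `x ∈ C⁺ = ker ε` vanishes for some `n ≥ 1` (encoded dually via convolutions of
    -- functionals vanishing at `e`)
    (hconil : ∀ x ∈ LinearMap.ker (Coalgebra.counit (R := k) (A := C)),
      ∃ n : ℕ, 1 ≤ n ∧ ∀ f : Fin n → (C →ₗ[k] k),
        (∀ i, f i e = 0) → iterConv k C n f x = 0)
    -- `(S, θ)` is a simple left `C`-contramodule
    (S : Type*) [AddCommGroup S] [Module k S]
    (θ : (C →ₗ[k] S) →ₗ[k] S) (hθ : IsContramodule k C θ)
    (hS_ne : Nontrivial S)
    (hS_simple : ∀ N : Submodule k S, IsSubContra k C θ N → N = ⊥ ∨ N = ⊤) :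
    Module.rank k S = 1 ∧ ∀ φ : C →ₗ[k] S, θ φ = φ e := by
  have hθe : ∀ φ : C →ₗ[k] S, θ φ = φ e := by
    rcases hS_simple _ (hθ.isSubContra_map_ker he_counit) with hbot | htop
    · intro φ
      simpa [hbot, sub_eq_zero] using hθ.sub_apply_mem_map_ker he_counit φ
    · exact absurd (hθ.subsingleton_of_map_ker_eq_top he_comul he_counit hconil htop)
        (not_subsingleton_iff_nontrivial.mpr hS_ne)
  have : IsSimpleModule k S :=
    { eq_bot_or_eq_top := fun N => hS_simple N fun φ hφ => hθe φ ▸ hφ ⟨e, rfl⟩ }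
  exact ⟨Module.rank_eq_one_iff_finrank_eq_one.mpr (isSimpleModule_iff_finrank_eq_one.mp this),
    hθe⟩

end
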